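/- arXiv:0803.0853 — 2 statements merged into one kernel-verified Lean document; each statement's English description precedes it below -/
import Mathlib

section
/- Let S be a complete lattice, C(S) = S ⊗ S^op with the quantale structure (x ⊗ y')·(u ⊗ v') = 0 if u ≤ y else x ⊗ v', Q(S) the endomorphism quantale, and φ : C(S) → Q(S) the map determined by φ(x ⊗ y') = ρ_x∘λ_y. Then φ, together with the Q(S)-bimodule structure on C(S) induced by α·(x ⊗ y') = α(x) ⊗ y' and (x ⊗ y')·α = x ⊗ α*(y)', makes C(S) → Q(S) a strong couple, and d = ⋁_{x ∈ S} (x ⊗ x') is a cyclic dualizing element, so this is a strong Girard couple. -/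
/-- A quantale: a complete lattice with an associative multiplication
distributing over arbitrary joins in both variables. -/
class Quantale' (α : Type*) extends CompleteLattice α, Mul α where
  mul_assoc : ∀ a b c : α, a * b * c = a * (b * c)
  mul_sSup : ∀ (a : α) (s : Set α), a * sSup s = ⨆ b ∈ s, a * b
  sSup_mul : ∀ (s : Set α) (a : α), sSup s * a = ⨆ b ∈ s, b * a

/-- A couple of quantales: a quantale `Q`, a quantale `C` which is also a
`Q`-bimodule, and a coupling map `φ : C → Q` which is a join-preserving
`Q`-bimodule homomorphism satisfying `φ(c₁)·c₂ = c₁·φ(c₂) = c₁·c₂`. -/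
structure Couple (C Q : Type*) [Quantale' C] [Quantale' Q] where
  φ : C → Q
  /-- the left action of `Q` on `C` -/
  act : Q → C → C
  /-- the right action of `Q` on `C` -/
  actr : C → Q → C
  act_sSup : ∀ (a : Q) (s : Set C), act a (sSup s) = ⨆ c ∈ s, act a c
  sSup_act : ∀ (s : Set Q) (c : C), act (sSup s) c = ⨆ a ∈ s, act a c
  actr_sSup : ∀ (c : C) (s : Set Q), actr c (sSup s) = ⨆ a ∈ s, actr c a
  sSup_actr : ∀ (s : Set C) (a : Q), actr (sSup s) a = ⨆ c ∈ s, actr c a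
  act_mul : ∀ (a b : Q) (c : C), act (a * b) c = act a (act b c)
  actr_mul : ∀ (c : C) (a b : Q), actr c (a * b) = actr (actr c a) b
  act_actr : ∀ (a : Q) (c : C) (b : Q), actr (act a c) b = act a (actr c b)
  φ_sSup : ∀ s : Set C, φ (sSup s) = ⨆ c ∈ s, φ c
  φ_act : ∀ (a : Q) (c : C), φ (act a c) = a * φ c
  φ_actr : ∀ (c : C) (a : Q), φ (actr c a) = φ c * a
  couple_left : ∀ c₁ c₂ : C, act (φ c₁) c₂ = c₁ * c₂
  couple_right : ∀ c₁ c₂ : C, actr c₁ (φ c₂) = c₁ * c₂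

/-- A Girard couple: a couple together with a cyclic dualizing element `d ∈ C`. -/
structure GirardCouple (C Q : Type*) [Quantale' C] [Quantale' Q] extends Couple C Q where
  d : C
  cyclic : ∀ (a : Q) (c : C), act a c ≤ d ↔ actr c a ≤ d
  /-- `d ⧸ (a → d) = a` for `a ∈ Q` -/
  dualizing_Q₁ : ∀ a : Q, sSup {b : Q | act b (sSup {c : C | actr c a ≤ d}) ≤ d} = a
  /-- `(d ⧸ a) → d = a` for `a ∈ Q` -/
  dualizing_Q₂ : ∀ a : Q, sSup {b : Q | actr (sSup {c : C | act a c ≤ d}) b ≤ d} = a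
  /-- `d ⧸ (c → d) = c` for `c ∈ C` -/
  dualizing_C₁ : ∀ c : C, sSup {c' : C | act (sSup {a : Q | actr c a ≤ d}) c' ≤ d} = c
  /-- `(d ⧸ c) → d = c` for `c ∈ C` -/
  dualizing_C₂ : ∀ c : C, sSup {c' : C | actr c' (sSup {a : Q | act a c ≤ d}) ≤ d} = c

section QS
variable {S : Type*} [CompleteLattice S]

/-- Pointwise suprema of join-preserving endomaps. -/
noncomputable instance sSupHom.instSupSetEnd : SupSet (sSupHom S S) :=
  ⟨fun s => ⟨fun x => ⨆ f ∈ s, f x, by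
    intro A
    rw [sSup_image]
    simp only [map_sSup, sSup_image]
    exact iSup₂_comm _⟩⟩

theorem sSupHom.sSup_apply' (s : Set (sSupHom S S)) (x : S) :
    sSup s x = ⨆ f ∈ s, f x := rfl

/-- `Q(S)`: the complete lattice of join-preserving endomaps of `S`. -/
noncomputable instance sSupHom.instCompleteLatticeEnd : CompleteLattice (sSupHom S S) :=
  completeLatticeOfSup _ fun s => by
    constructor
    · intro f hf x
      exact le_biSup (fun g : sSupHom S S => g x) hf
    · intro g hg x
      exact iSup₂_le fun f hf => hg hf x

/-- The endomorphism quantale `Q(S)`, with composition as multiplication. -/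
noncomputable instance sSupHom.instQuantaleEnd : Quantale' (sSupHom S S) where
  __ := sSupHom.instCompleteLatticeEnd
  mul := fun f g => f.comp g
  mul_assoc := fun _ _ _ => rfl
  mul_sSup := by
    intro a s
    apply DFunLike.ext
    intro x
    rw [← sSup_image, sSupHom.sSup_apply', iSup_image]
    show a ((sSup s) x) = _
    rw [sSupHom.sSup_apply' s x, map_iSup₂]
    rfl
  sSup_mul := by
    intro s a
    apply DFunLike.ext
    intro x
    rw [← sSup_image, sSupHom.sSup_apply', iSup_image]
    show (sSup s) (a x) = _
    rw [sSupHom.sSup_apply' s (a x)]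
    rfl

open Classical in
/-- The right-sided element `ρ_x` of `Q(S)`. -/
noncomputable def rho (x : S) : sSupHom S S :=
  ⟨fun y => if y = ⊥ then ⊥ else x, by
    intro A
    rw [sSup_image]
    show (if sSup A = ⊥ then ⊥ else x) = _
    rcases eq_or_ne (sSup A) ⊥ with h | h
    · rw [h, if_pos rfl]

      refine (le_bot_iff.mp (iSup₂_le fun y hy => ?_)).symm
      have hy' : y = ⊥ := le_bot_iff.mp ((le_sSup hy).trans_eq h)
      simp [hy']
    · rw [if_neg h]
      refine le_antisymm ?_ (iSup₂_le fun y hy => ?_)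
      · obtain ⟨a, ha, hab⟩ : ∃ a ∈ A, a ≠ ⊥ := by
          by_contra hc
          push_neg at hc
          exact h (sSup_eq_bot.mpr hc)
        have hx : x = if a = ⊥ then ⊥ else x := by simp [hab]
        exact hx.le.trans (le_biSup (fun y => if y = ⊥ then ⊥ else x) ha)
      · split
        · exact bot_le
        · exact le_rfl⟩

open Classical in
/-- The left-sided element `λ_x` of `Q(S)`. -/
noncomputable def lam (x : S) : sSupHom S S :=
  ⟨fun y => if y ≤ x then ⊥ else ⊤, by
    intro A
    rw [sSup_image]
    show (if sSup A ≤ x then ⊥ else ⊤) = _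
    by_cases h : sSup A ≤ x
    · rw [if_pos h]
      refine (le_bot_iff.mp (iSup₂_le fun y hy => ?_)).symm
      rw [if_pos ((le_sSup hy).trans h)]
    · rw [if_neg h]
      obtain ⟨a, ha, hax⟩ : ∃ a ∈ A, ¬ a ≤ x := by
        by_contra hc
        push_neg at hc
        exact h (sSup_le hc)
      refine le_antisymm ?_ le_top
      have ht : (⊤ : S) = if a ≤ x then ⊥ else ⊤ := by simp [hax]
      exact ht.le.trans (le_biSup (fun y => if y ≤ x then ⊥ else ⊤) ha)⟩

/-- The right adjoint of a join-preserving map. -/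
noncomputable def adj (α : sSupHom S S) (x : S) : S := sSup {y | α y ≤ x}

end QS

/-- A bimorphism of complete lattices: a map preserving arbitrary joins in each
variable separately. -/
def IsBimorphism {S T U : Type*} [CompleteLattice S] [CompleteLattice T]
    [CompleteLattice U] (f : S → T → U) : Prop :=
  (∀ (A : Set S) (y : T), f (sSup A) y = ⨆ x ∈ A, f x y) ∧
  (∀ (x : S) (B : Set T), f x (sSup B) = ⨆ y ∈ B, f x y)

/-- `(P, gen)` is a presentation of the tensor product `S ⊗ T` of sup-lattices:
`gen` is the universal bimorphism. -/
structure IsTensor (S T P : Type u) [CompleteLattice S] [CompleteLattice T]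
    [CompleteLattice P] (gen : S → T → P) : Prop where
  bimorph : IsBimorphism gen
  universal : ∀ (U : Type u) [CompleteLattice U] (f : S → T → U), IsBimorphism f →
      ∃! g : sSupHom P U, ∀ x y, g (gen x y) = f x y


/-!
The tensor product `S ⊗ Sᵒᵈ` is anti-isomorphic to `Q(S)`: an element `c` codes the
join-preserving map `u ↦ ⋀ {v | u ⊗ v' ≤ c}`, with inverse `α ↦ ⋁ₓ x ⊗ (α x)'`. Under this
correspondence `d = ⋁ₓ x ⊗ x'` is the graph of the identity, and both `α · c ≤ d` and
`c · α ≤ d` say that `α` lies below the map coded by `c`; cyclicity and the four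
double-orthogonality identities follow at once. That `⋁ₓ x ⊗ (α x)'` codes `α` again needs a map
out of the tensor product: lifting `x ⊗ y' ↦ ρ_y ⊔ λ_x`, the largest endomap sending `x` below `y`,
shows that `u ⊗ v'` lies below it only if `α u ≤ v`. The actions, the coupling and the couple laws
are checked on the generators `x ⊗ y'`, which join-generate the tensor product.
-/

open OrderDual

universe u

namespace Quantale'

variable {R : Type*} [Quantale' R]

theorem mul_biSup (a : R) {ι : Type*} (s : Set ι) (f : ι → R) :
    a * ⨆ i ∈ s, f i = ⨆ i ∈ s, a * f i := by
  rw [← sSup_image, mul_sSup, iSup_image]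

theorem biSup_mul {ι : Type*} (s : Set ι) (f : ι → R) (a : R) :
    (⨆ i ∈ s, f i) * a = ⨆ i ∈ s, f i * a := by
  rw [← sSup_image, sSup_mul, iSup_image]

end Quantale'

namespace sSupHom

variable {S : Type*} [CompleteLattice S]

theorem sup_apply' (f g : sSupHom S S) (x : S) : (f ⊔ g) x = f x ⊔ g x := by
  rw [← sSup_pair, sSup_apply', iSup_pair]

theorem mul_apply' (f g : sSupHom S S) (x : S) : (f * g) x = f (g x) := rfl

end sSupHom

section RhoLam

variable {S : Type*} [CompleteLattice S] {x y u : S}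

theorem rho_apply_bot (x : S) : rho x ⊥ = ⊥ := if_pos rfl

theorem rho_apply_of_ne_bot (x : S) (hu : u ≠ ⊥) : rho x u = x := if_neg hu

theorem lam_apply_of_le (h : u ≤ y) : lam y u = ⊥ := if_pos h

theorem lam_apply_of_not_le (h : ¬u ≤ y) : lam y u = ⊤ := if_neg h

theorem rho_mul_lam_apply_of_le (x : S) (h : u ≤ y) : (rho x * lam y) u = ⊥ := by
  rw [sSupHom.mul_apply', lam_apply_of_le h, rho_apply_bot]

theorem rho_mul_lam_apply_of_not_le (x : S) (h : ¬u ≤ y) : (rho x * lam y) u = x := by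
  rw [sSupHom.mul_apply', lam_apply_of_not_le h, rho_apply_of_ne_bot x]
  exact fun htop => h (le_top.trans (htop.le.trans bot_le))

theorem rho_top_mul_lam_bot : rho ⊤ * lam ⊥ = (⊤ : sSupHom S S) := by
  refine top_le_iff.mp fun u => ?_
  rcases eq_or_ne u ⊥ with rfl | hu
  · simp
  · rw [rho_mul_lam_apply_of_not_le ⊤ (mt le_bot_iff.mp hu)]
    exact le_top

theorem rho_mul_lam_le_iff {β : sSupHom S S} :
    rho x * lam y ≤ β ↔ ∀ u, ¬u ≤ y → x ≤ β u := by
  refine ⟨fun h u hu => rho_mul_lam_apply_of_not_le x hu ▸ h u, fun h u => ?_⟩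
  by_cases hu : u ≤ y
  · exact (rho_mul_lam_apply_of_le x hu).trans_le bot_le
  · exact (rho_mul_lam_apply_of_not_le x hu).trans_le (h u hu)

theorem rho_sSup_mul_lam (A : Set S) (y : S) :
    rho (sSup A) * lam y = ⨆ x ∈ A, rho x * lam y := by
  refine eq_of_forall_ge_iff fun β => ?_
  simp only [rho_mul_lam_le_iff, iSup₂_le_iff, sSup_le_iff]
  exact ⟨fun h x hx u hu => h u hu x hx, fun h u hu x hx => h x hx u hu⟩

theorem rho_mul_lam_sInf (x : S) (B : Set S) :
    rho x * lam (sInf B) = ⨆ y ∈ B, rho x * lam y := by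
  refine eq_of_forall_ge_iff fun β => ?_
  simp only [rho_mul_lam_le_iff, iSup₂_le_iff, le_sInf_iff, not_forall]
  grind

theorem mul_rho_mul_lam (α : sSupHom S S) (x y : S) :
    α * (rho x * lam y) = rho (α x) * lam y := by
  ext u
  by_cases hu : u ≤ y
  · rw [sSupHom.mul_apply', rho_mul_lam_apply_of_le _ hu, rho_mul_lam_apply_of_le _ hu, map_bot]
  · rw [sSupHom.mul_apply', rho_mul_lam_apply_of_not_le _ hu, rho_mul_lam_apply_of_not_le _ hu]

theorem le_rho_sup_lam_iff {α : sSupHom S S} : α ≤ rho y ⊔ lam x ↔ α x ≤ y := by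
  refine ⟨fun h => ?_, fun h u => ?_⟩
  · rcases eq_or_ne x ⊥ with rfl | hx
    · simp
    · simpa [sSupHom.sup_apply', rho_apply_of_ne_bot y hx, lam_apply_of_le le_rfl] using h x
  · rw [sSupHom.sup_apply']
    rcases eq_or_ne u ⊥ with rfl | hu
    · simp
    by_cases hux : u ≤ x
    · rw [rho_apply_of_ne_bot y hu]
      exact le_sup_of_le_left ((OrderHomClass.mono α hux).trans h)
    · simp [lam_apply_of_not_le hux]

theorem rho_sup_lam_sSup (y : S) (A : Set S) :
    rho y ⊔ lam (sSup A) = ⨅ x ∈ A, (rho y ⊔ lam x) := by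
  refine eq_of_forall_le_iff fun α => ?_
  simp only [le_rho_sup_lam_iff, le_iInf₂_iff, map_sSup, sSup_le_iff, Set.forall_mem_image]

theorem rho_sInf_sup_lam (B : Set S) (x : S) :
    rho (sInf B) ⊔ lam x = ⨅ y ∈ B, (rho y ⊔ lam x) := by
  refine eq_of_forall_le_iff fun α => ?_
  simp only [le_rho_sup_lam_iff, le_iInf₂_iff, le_sInf_iff]

end RhoLam

section Adjoint

variable {S : Type*} [CompleteLattice S]

theorem gc_adj (α : sSupHom S S) : GaloisConnection α (adj α) := fun _ _ =>
  ⟨fun h => le_sSup h, fun h => (OrderHomClass.mono α h).trans (by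
    rw [adj, map_sSup]; exact sSup_le (by rintro _ ⟨z, hz, rfl⟩; exact hz))⟩

theorem adj_sSup (s : Set (sSupHom S S)) (y : S) : adj (sSup s) y = ⨅ α ∈ s, adj α y := by
  refine eq_of_forall_le_iff fun z => ?_
  simp only [(gc_adj _).le_iff_le.symm, le_iInf₂_iff, sSupHom.sSup_apply', iSup₂_le_iff]

theorem adj_mul (α β : sSupHom S S) (y : S) : adj (α * β) y = adj β (adj α y) :=
  (gc_adj (α * β)).u_unique ((gc_adj β).compose (gc_adj α)) (fun _ => rfl)

theorem rho_mul_lam_mul (α : sSupHom S S) (x y : S) :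
    rho x * lam y * α = rho x * lam (adj α y) := by
  ext u
  by_cases hu : α u ≤ y
  · rw [sSupHom.mul_apply', rho_mul_lam_apply_of_le _ hu,
      rho_mul_lam_apply_of_le _ ((gc_adj α).le_iff_le.mp hu)]
  · rw [sSupHom.mul_apply', rho_mul_lam_apply_of_not_le _ hu,
      rho_mul_lam_apply_of_not_le _ (mt (gc_adj α).le_iff_le.mpr hu)]

theorem adj_rho_mul_lam_of_le {x v : S} (y : S) (h : x ≤ v) : adj (rho x * lam y) v = ⊤ :=
  top_le_iff.mp <| (gc_adj _).le_iff_le.mp <| by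
    by_cases hy : ⊤ ≤ y
    · simp [rho_mul_lam_apply_of_le x hy]
    · simpa [rho_mul_lam_apply_of_not_le x hy] using h

theorem adj_rho_mul_lam_of_not_le {x v : S} (y : S) (h : ¬x ≤ v) :
    adj (rho x * lam y) v = y := by
  refine eq_of_forall_le_iff fun z => ?_
  rw [← (gc_adj _).le_iff_le]
  by_cases hz : z ≤ y
  · simp [rho_mul_lam_apply_of_le x hz, hz]
  · simp [rho_mul_lam_apply_of_not_le x hz, hz, h]

noncomputable def adjDual (α : sSupHom S S) : sSupHom Sᵒᵈ Sᵒᵈ :=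
  ⟨fun y => toDual (adj α (ofDual y)), fun _ => ((gc_adj α).dual.l_sSup).trans sSup_image.symm⟩

@[simp]
theorem adjDual_apply (α : sSupHom S S) (y : Sᵒᵈ) : adjDual α y = toDual (adj α (ofDual y)) := rfl

theorem adjDual_mul (α β : sSupHom S S) : adjDual (α * β) = (adjDual β).comp (adjDual α) :=
  sSupHom.ext fun y => congrArg toDual (adj_mul α β (ofDual y))

theorem adjDual_sSup_apply (s : Set (sSupHom S S)) (y : Sᵒᵈ) :
    adjDual (sSup s) y = ⨆ α ∈ s, adjDual α y := by
  simp [adjDual, adj_sSup]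

end Adjoint

def tensorGraph {S P : Type*} [CompleteLattice S] [CompleteLattice P] (gen : S → Sᵒᵈ → P)
    (α : sSupHom S S) : P :=
  ⨆ x, gen x (toDual (α x))

open Classical in
def TensorMulRule {S P : Type*} [CompleteLattice S] [Quantale' P] (gen : S → Sᵒᵈ → P) : Prop :=
  ∀ x y u v : S, gen x (toDual y) * gen u (toDual v) = if u ≤ y then ⊥ else gen x (toDual v)

namespace IsTensor

section General

variable {S T P : Type u} [CompleteLattice S] [CompleteLattice T] [CompleteLattice P]
  {gen : S → T → P}

def genLeft (ht : IsTensor S T P gen) (y : T) : sSupHom S P :=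
  ⟨(gen · y), fun A => (ht.bimorph.1 A y).trans sSup_image.symm⟩

def genRight (ht : IsTensor S T P gen) (x : S) : sSupHom T P :=
  ⟨gen x, fun B => (ht.bimorph.2 x B).trans sSup_image.symm⟩

theorem gen_mono_left (ht : IsTensor S T P gen) (y : T) : Monotone (gen · y) :=
  OrderHomClass.mono (ht.genLeft y)

theorem gen_mono_right (ht : IsTensor S T P gen) (x : S) : Monotone (gen x) :=
  OrderHomClass.mono (ht.genRight x)

theorem gen_bot_left (ht : IsTensor S T P gen) (y : T) : gen ⊥ y = ⊥ :=
  map_bot (ht.genLeft y)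

theorem gen_bot_right (ht : IsTensor S T P gen) (x : S) : gen x ⊥ = ⊥ :=
  map_bot (ht.genRight x)

theorem gen_biSup_left (ht : IsTensor S T P gen) {ι : Type*} (s : Set ι) (f : ι → S) (y : T) :
    gen (⨆ i ∈ s, f i) y = ⨆ i ∈ s, gen (f i) y :=
  map_iSup₂ (ht.genLeft y) _

theorem gen_biSup_right (ht : IsTensor S T P gen) {ι : Type*} (x : S) (s : Set ι) (f : ι → T) :
    gen x (⨆ i ∈ s, f i) = ⨆ i ∈ s, gen x (f i) :=
  map_iSup₂ (ht.genRight x) _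

noncomputable def lift (ht : IsTensor S T P gen) {U : Type u} [CompleteLattice U]
    (f : S → T → U) (hf : IsBimorphism f) : sSupHom P U :=
  (ht.universal U f hf).exists.choose

theorem lift_gen (ht : IsTensor S T P gen) {U : Type u} [CompleteLattice U]
    (f : S → T → U) (hf : IsBimorphism f) (x : S) (y : T) : ht.lift f hf (gen x y) = f x y :=
  (ht.universal U f hf).exists.choose_spec x y

theorem hom_ext (ht : IsTensor S T P gen) {U : Type u} [CompleteLattice U] {g h : sSupHom P U}
    (H : ∀ x y, g (gen x y) = h (gen x y)) : g = h := by
  have hg : IsBimorphism fun x y => g (gen x y) :=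
    ⟨fun A y => by dsimp only; rw [ht.bimorph.1, map_iSup₂],
      fun x B => by dsimp only; rw [ht.bimorph.2, map_iSup₂]⟩
  exact (ht.universal U _ hg).unique (fun _ _ => rfl) fun x y => (H x y).symm

theorem sSup_gen_le (ht : IsTensor S T P gen) (c : P) :
    sSup {p | p ≤ c ∧ ∃ x y, gen x y = p} = c := by
  set k : P → P := fun b => sSup {p | p ≤ b ∧ ∃ x y, gen x y = p}
  refine le_antisymm (sSup_le fun _ hp => hp.1) ?_
  -- The maps `a ↦ {b | ¬ a ≤ F b}` into `Set P` preserve joins; for `F = id` and `F = k` they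
  -- agree on generators.
  let notLe (F : P → P) : sSupHom P (Set P) :=
    ⟨fun a => {b | ¬a ≤ F b}, fun s => by ext b; simp [sSup_le_iff]⟩
  have hk : notLe id = notLe k := ht.hom_ext fun x y => Set.ext fun b =>
    not_congr ⟨fun h => le_sSup ⟨h, x, y, rfl⟩, fun h => h.trans (sSup_le fun _ hp => hp.1)⟩
  have hc := Set.ext_iff.mp (DFunLike.congr_fun hk c) c
  exact not_not.mp fun hnot => hc.mpr hnot le_rfl

theorem map_le_iff (ht : IsTensor S T P gen) {U : Type*} [CompleteLattice U] (f : sSupHom P U)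
    (c : P) (b : U) : f c ≤ b ↔ ∀ x y, gen x y ≤ c → f (gen x y) ≤ b := by
  conv_lhs => rw [← ht.sSup_gen_le c]
  rw [map_sSup, sSup_le_iff, Set.forall_mem_image]
  exact ⟨fun h x y hxy => h ⟨hxy, x, y, rfl⟩, fun h p ⟨hp, x, y, hxy⟩ => hxy ▸ h x y (hxy ▸ hp)⟩

theorem le_iff_forall_gen_le (ht : IsTensor S T P gen) (c b : P) :
    c ≤ b ↔ ∀ x y, gen x y ≤ c → gen x y ≤ b :=
  ht.map_le_iff (sSupHom.id P) c b

@[elab_as_elim]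
theorem induction_on (ht : IsTensor S T P gen) {p : P → Prop} (c : P)
    (hsSup : ∀ s, (∀ c ∈ s, p c) → p (sSup s)) (hgen : ∀ x y, p (gen x y)) : p c := by
  rw [← ht.sSup_gen_le c]
  exact hsSup _ fun _ ⟨_, x, y, hxy⟩ => hxy ▸ hgen x y

theorem top_eq_gen_top_top (ht : IsTensor S T P gen) : (⊤ : P) = gen ⊤ ⊤ :=
  (top_le_iff.mp <| (ht.le_iff_forall_gen_le ⊤ _).mpr fun _ y _ =>
    (ht.gen_mono_left y le_top).trans (ht.gen_mono_right ⊤ le_top)).symm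

noncomputable def map (ht : IsTensor S T P gen) (f : sSupHom S S) (g : sSupHom T T) :
    sSupHom P P :=
  ht.lift (fun x y => gen (f x) (g y))
    ⟨fun A y => by simp only [map_sSup, sSup_image, ht.gen_biSup_left],
      fun x B => by simp only [map_sSup, sSup_image, ht.gen_biSup_right]⟩

@[simp]
theorem map_gen (ht : IsTensor S T P gen) (f : sSupHom S S) (g : sSupHom T T) (x : S) (y : T) :
    ht.map f g (gen x y) = gen (f x) (g y) :=
  ht.lift_gen _ _ x y

theorem map_map (ht : IsTensor S T P gen) (f f' : sSupHom S S) (g g' : sSupHom T T) (c : P) :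
    ht.map f g (ht.map f' g' c) = ht.map (f.comp f') (g.comp g') c :=
  DFunLike.congr_fun (ht.hom_ext (g := (ht.map f g).comp (ht.map f' g')) fun x y => by simp) c

end General

section Dual

variable {S P : Type u} [CompleteLattice S] [CompleteLattice P] {gen : S → Sᵒᵈ → P}

theorem gen_le_iff_sInf_le (ht : IsTensor S Sᵒᵈ P gen) {c : P} {u v : S} :
    gen u (toDual v) ≤ c ↔ sInf {w | gen u (toDual w) ≤ c} ≤ v := by
  refine ⟨fun h => sInf_le h, fun h => (ht.gen_mono_right u (toDual_le_toDual.mpr h)).trans ?_⟩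
  simp only [sInf_eq_iInf, toDual_iInf, ht.gen_biSup_right]
  exact iSup₂_le fun _ hw => hw

noncomputable def toEnd (ht : IsTensor S Sᵒᵈ P gen) (c : P) : sSupHom S S :=
  ⟨fun u => sInf {v | gen u (toDual v) ≤ c}, fun A => eq_of_forall_ge_iff fun v => by
    rw [← ht.gen_le_iff_sInf_le, sSup_le_iff, Set.forall_mem_image, ht.bimorph.1, iSup₂_le_iff]
    simp only [← ht.gen_le_iff_sInf_le]⟩

theorem gen_le_iff_toEnd_le (ht : IsTensor S Sᵒᵈ P gen) {c : P} {u v : S} :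
    gen u (toDual v) ≤ c ↔ ht.toEnd c u ≤ v :=
  ht.gen_le_iff_sInf_le

theorem le_toEnd_iff (ht : IsTensor S Sᵒᵈ P gen) {α : sSupHom S S} {c : P} :
    α ≤ ht.toEnd c ↔ ∀ u v, gen u (toDual v) ≤ c → α u ≤ v := by
  simp only [ht.gen_le_iff_toEnd_le]
  exact ⟨fun h u _ huv => (h u).trans huv, fun h u => h u _ le_rfl⟩

noncomputable def liftRhoSupLam (ht : IsTensor S Sᵒᵈ P gen) : sSupHom P (sSupHom S S)ᵒᵈ :=
  ht.lift (fun x y => toDual (rho (ofDual y) ⊔ lam x))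
    ⟨fun A y => by dsimp only; rw [rho_sup_lam_sSup]; simp only [toDual_iInf],
      fun x B => by dsimp only; rw [ofDual_sSup, rho_sInf_sup_lam]; simp only [toDual_iInf]; rfl⟩

theorem liftRhoSupLam_gen (ht : IsTensor S Sᵒᵈ P gen) (x : S) (y : Sᵒᵈ) :
    ht.liftRhoSupLam (gen x y) = toDual (rho (ofDual y) ⊔ lam x) :=
  ht.lift_gen _ _ x y

theorem gen_le_tensorGraph_iff (ht : IsTensor S Sᵒᵈ P gen) {α : sSupHom S S} {u v : S} :
    gen u (toDual v) ≤ tensorGraph gen α ↔ α u ≤ v := by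
  refine ⟨fun h => ?_, fun h => (ht.gen_mono_right u (toDual_le_toDual.mpr h)).trans
    (le_iSup (fun x => gen x (toDual (α x))) u)⟩
  have hgraph : α ≤ ofDual (ht.liftRhoSupLam (tensorGraph gen α)) := by
    simp only [tensorGraph, map_iSup, ofDual_iSup, ht.liftRhoSupLam_gen, ofDual_toDual]
    exact le_iInf fun x => le_rho_sup_lam_iff.mpr le_rfl
  have hgen : ofDual (ht.liftRhoSupLam (tensorGraph gen α)) ≤ rho v ⊔ lam u := by
    have hmono := OrderHomClass.mono ht.liftRhoSupLam h
    rwa [ht.liftRhoSupLam_gen] at hmono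
  exact le_rho_sup_lam_iff.mp (hgraph.trans hgen)

theorem le_tensorGraph_iff (ht : IsTensor S Sᵒᵈ P gen) {c : P} {α : sSupHom S S} :
    c ≤ tensorGraph gen α ↔ α ≤ ht.toEnd c := by
  simp only [ht.le_iff_forall_gen_le c, OrderDual.forall, ht.gen_le_tensorGraph_iff,
    ht.le_toEnd_iff]

theorem toEnd_tensorGraph (ht : IsTensor S Sᵒᵈ P gen) (α : sSupHom S S) :
    ht.toEnd (tensorGraph gen α) = α :=
  sSupHom.ext fun u => eq_of_forall_ge_iff fun v => by
    rw [← ht.gen_le_iff_toEnd_le, ht.gen_le_tensorGraph_iff]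

theorem tensorGraph_toEnd (ht : IsTensor S Sᵒᵈ P gen) (c : P) : tensorGraph gen (ht.toEnd c) = c :=
  le_antisymm (iSup_le fun _ => ht.gen_le_iff_toEnd_le.mpr le_rfl)
    (ht.le_tensorGraph_iff.mpr le_rfl)

theorem sSup_setOf_le_toEnd (ht : IsTensor S Sᵒᵈ P gen) (α : sSupHom S S) :
    sSup {c | α ≤ ht.toEnd c} = tensorGraph gen α := by
  simp only [← ht.le_tensorGraph_iff, Set.Iic_def, csSup_Iic]


noncomputable def leftAct (ht : IsTensor S Sᵒᵈ P gen) (α : sSupHom S S) : sSupHom P P :=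
  ht.map α (sSupHom.id Sᵒᵈ)

noncomputable def rightAct (ht : IsTensor S Sᵒᵈ P gen) (α : sSupHom S S) : sSupHom P P :=
  ht.map (sSupHom.id S) (adjDual α)

theorem leftAct_gen (ht : IsTensor S Sᵒᵈ P gen) (α : sSupHom S S) (x : S) (y : Sᵒᵈ) :
    ht.leftAct α (gen x y) = gen (α x) y :=
  ht.map_gen _ _ x y

theorem rightAct_gen (ht : IsTensor S Sᵒᵈ P gen) (α : sSupHom S S) (x : S) (y : Sᵒᵈ) :
    ht.rightAct α (gen x y) = gen x (adjDual α y) :=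
  ht.map_gen _ _ x y

theorem leftAct_mul (ht : IsTensor S Sᵒᵈ P gen) (α β : sSupHom S S) (c : P) :
    ht.leftAct (α * β) c = ht.leftAct α (ht.leftAct β c) := by
  rw [leftAct, leftAct, leftAct, map_map]; rfl

theorem rightAct_mul (ht : IsTensor S Sᵒᵈ P gen) (α β : sSupHom S S) (c : P) :
    ht.rightAct (α * β) c = ht.rightAct β (ht.rightAct α c) := by
  rw [rightAct, rightAct, rightAct, map_map, adjDual_mul, sSupHom.id_comp]

theorem rightAct_leftAct (ht : IsTensor S Sᵒᵈ P gen) (α β : sSupHom S S) (c : P) :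
    ht.rightAct β (ht.leftAct α c) = ht.leftAct α (ht.rightAct β c) := by
  simp only [leftAct, rightAct, map_map, sSupHom.id_comp, sSupHom.comp_id]

theorem leftAct_sSup (ht : IsTensor S Sᵒᵈ P gen) (s : Set (sSupHom S S)) (c : P) :
    ht.leftAct (sSup s) c = ⨆ α ∈ s, ht.leftAct α c := by
  refine ht.induction_on c (fun t ih => ?_) fun x y => ?_
  · simp only [map_sSup, sSup_image]
    rw [iSup₂_comm]
    exact iSup_congr fun c => iSup_congr (ih c)
  · simp only [leftAct_gen, sSupHom.sSup_apply', ht.gen_biSup_left]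

theorem rightAct_sSup (ht : IsTensor S Sᵒᵈ P gen) (s : Set (sSupHom S S)) (c : P) :
    ht.rightAct (sSup s) c = ⨆ α ∈ s, ht.rightAct α c := by
  refine ht.induction_on c (fun t ih => ?_) fun x y => ?_
  · simp only [map_sSup, sSup_image]
    rw [iSup₂_comm]
    exact iSup_congr fun c => iSup_congr (ih c)
  · simp only [rightAct_gen, adjDual_sSup_apply, ht.gen_biSup_right]

theorem leftAct_le_tensorGraph_id_iff (ht : IsTensor S Sᵒᵈ P gen) (α : sSupHom S S) (c : P) :
    ht.leftAct α c ≤ tensorGraph gen (sSupHom.id S) ↔ α ≤ ht.toEnd c := by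
  simp only [ht.map_le_iff, OrderDual.forall, leftAct_gen, ht.gen_le_tensorGraph_iff,
    sSupHom.id_apply, ht.le_toEnd_iff]

theorem rightAct_le_tensorGraph_id_iff (ht : IsTensor S Sᵒᵈ P gen) (α : sSupHom S S) (c : P) :
    ht.rightAct α c ≤ tensorGraph gen (sSupHom.id S) ↔ α ≤ ht.toEnd c := by
  simp only [ht.map_le_iff, OrderDual.forall, rightAct_gen, adjDual_apply, ofDual_toDual,
    ht.gen_le_tensorGraph_iff, sSupHom.id_apply, ← (gc_adj α).le_iff_le, ht.le_toEnd_iff]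

noncomputable def coupling (ht : IsTensor S Sᵒᵈ P gen) : sSupHom P (sSupHom S S) :=
  ht.lift (fun x y => rho x * lam (ofDual y))
    ⟨fun A y => rho_sSup_mul_lam A _, fun x B => by
      dsimp only; rw [ofDual_sSup, rho_mul_lam_sInf]; rfl⟩

theorem coupling_gen (ht : IsTensor S Sᵒᵈ P gen) (x : S) (y : Sᵒᵈ) :
    ht.coupling (gen x y) = rho x * lam (ofDual y) :=
  ht.lift_gen _ _ x y

theorem coupling_top (ht : IsTensor S Sᵒᵈ P gen) : ht.coupling ⊤ = ⊤ := by
  rw [ht.top_eq_gen_top_top, coupling_gen]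
  exact rho_top_mul_lam_bot

theorem coupling_leftAct (ht : IsTensor S Sᵒᵈ P gen) (α : sSupHom S S) (c : P) :
    ht.coupling (ht.leftAct α c) = α * ht.coupling c := by
  refine ht.induction_on c (fun s ih => ?_) fun x y => ?_
  · simp only [map_sSup, sSup_image, map_iSup₂, Quantale'.mul_biSup]
    exact iSup_congr fun c => iSup_congr (ih c)
  · rw [leftAct_gen, coupling_gen, coupling_gen, mul_rho_mul_lam]

theorem coupling_rightAct (ht : IsTensor S Sᵒᵈ P gen) (α : sSupHom S S) (c : P) :
    ht.coupling (ht.rightAct α c) = ht.coupling c * α := by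
  refine ht.induction_on c (fun s ih => ?_) fun x y => ?_
  · simp only [map_sSup, sSup_image, map_iSup₂, Quantale'.biSup_mul]
    exact iSup_congr fun c => iSup_congr (ih c)
  · rw [rightAct_gen, coupling_gen, coupling_gen, rho_mul_lam_mul]
    rfl

end Dual

section Couple

variable {S P : Type u} [CompleteLattice S] [Quantale' P] {gen : S → Sᵒᵈ → P}

theorem gen_coupling_apply (ht : IsTensor S Sᵒᵈ P gen)
    (hmul : TensorMulRule gen) (c : P) (x : S) (y : Sᵒᵈ) : gen (ht.coupling c x) y = c * gen x y := by
  refine ht.induction_on c (fun s ih => ?_) fun u v => ?_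
  · rw [map_sSup, sSupHom.sSup_apply', iSup_image, ht.gen_biSup_left, Quantale'.sSup_mul]
    exact iSup_congr fun c => iSup_congr (ih c)
  · have huv := hmul u (ofDual v) x (ofDual y)
    rw [toDual_ofDual, toDual_ofDual] at huv
    rw [coupling_gen, huv]
    split_ifs with hx
    · rw [rho_mul_lam_apply_of_le u hx, ht.gen_bot_left]
    · rw [rho_mul_lam_apply_of_not_le u hx]

theorem gen_adjDual_coupling (ht : IsTensor S Sᵒᵈ P gen)
    (hmul : TensorMulRule gen) (c : P) (x : S) (y : Sᵒᵈ) : gen x (adjDual (ht.coupling c) y) = gen x y * c := by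
  refine ht.induction_on c (fun s ih => ?_) fun u v => ?_
  · rw [map_sSup, adjDual_sSup_apply, iSup_image, ht.gen_biSup_right, Quantale'.mul_sSup]
    exact iSup_congr fun c => iSup_congr (ih c)
  · have huv := hmul x (ofDual y) u (ofDual v)
    rw [toDual_ofDual, toDual_ofDual] at huv
    rw [coupling_gen, adjDual_apply, huv]
    split_ifs with hu
    · rw [adj_rho_mul_lam_of_le _ hu, toDual_top, ht.gen_bot_right]
    · rw [adj_rho_mul_lam_of_not_le _ hu, toDual_ofDual]

theorem leftAct_coupling (ht : IsTensor S Sᵒᵈ P gen)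
    (hmul : TensorMulRule gen) (c₁ c₂ : P) : ht.leftAct (ht.coupling c₁) c₂ = c₁ * c₂ := by
  refine ht.induction_on c₂ (fun s ih => ?_) fun x y => ?_
  · rw [map_sSup, sSup_image, Quantale'.mul_sSup]
    exact iSup_congr fun c => iSup_congr (ih c)
  · rw [leftAct_gen, ht.gen_coupling_apply hmul]

theorem rightAct_coupling (ht : IsTensor S Sᵒᵈ P gen)
    (hmul : TensorMulRule gen) (c₁ c₂ : P) : ht.rightAct (ht.coupling c₂) c₁ = c₁ * c₂ := by
  refine ht.induction_on c₁ (fun s ih => ?_) fun x y => ?_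
  · rw [map_sSup, sSup_image, Quantale'.sSup_mul]
    exact iSup_congr fun c => iSup_congr (ih c)
  · rw [rightAct_gen, ht.gen_adjDual_coupling hmul]

noncomputable def girardCouple (ht : IsTensor S Sᵒᵈ P gen)
    (hmul : TensorMulRule gen) : GirardCouple P (sSupHom S S) where
  φ := ht.coupling
  act α c := ht.leftAct α c
  actr c α := ht.rightAct α c
  act_sSup α s := by rw [map_sSup, sSup_image]
  sSup_act := ht.leftAct_sSup
  actr_sSup c s := ht.rightAct_sSup s c
  sSup_actr s α := by rw [map_sSup, sSup_image]
  act_mul := ht.leftAct_mul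
  actr_mul c α β := ht.rightAct_mul α β c
  act_actr α c β := ht.rightAct_leftAct α β c
  φ_sSup s := by rw [map_sSup, sSup_image]
  φ_act := ht.coupling_leftAct
  φ_actr c α := ht.coupling_rightAct α c
  couple_left := ht.leftAct_coupling hmul
  couple_right := ht.rightAct_coupling hmul
  d := tensorGraph gen (sSupHom.id S)
  cyclic α c := (ht.leftAct_le_tensorGraph_id_iff α c).trans
    (ht.rightAct_le_tensorGraph_id_iff α c).symm
  dualizing_Q₁ α := by
    simp only [leftAct_le_tensorGraph_id_iff, rightAct_le_tensorGraph_id_iff,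
      sSup_setOf_le_toEnd, toEnd_tensorGraph, Set.Iic_def, csSup_Iic]
  dualizing_Q₂ α := by
    simp only [leftAct_le_tensorGraph_id_iff, rightAct_le_tensorGraph_id_iff,
      sSup_setOf_le_toEnd, toEnd_tensorGraph, Set.Iic_def, csSup_Iic]
  dualizing_C₁ c := by
    simp only [leftAct_le_tensorGraph_id_iff, rightAct_le_tensorGraph_id_iff,
      sSup_setOf_le_toEnd, tensorGraph_toEnd, Set.Iic_def, csSup_Iic]
  dualizing_C₂ c := by
    simp only [leftAct_le_tensorGraph_id_iff, rightAct_le_tensorGraph_id_iff,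
      sSup_setOf_le_toEnd, tensorGraph_toEnd, Set.Iic_def, csSup_Iic]

end Couple

end IsTensor

open OrderDual Classical in
/-- The coupling `φ(x ⊗ y') = ρ_x∘λ_y`, with the bimodule actions
`α·(x ⊗ y') = α(x) ⊗ y'` and `(x ⊗ y')·α = x ⊗ α*(y)'`, makes
`C(S) → Q(S)` a strong Girard couple with cyclic dualizing element
`d = ⋁_x (x ⊗ x')`. -/
theorem stmt14 {S : Type u} {P : Type u} [CompleteLattice S] [Quantale' P]
    (gen : S → Sᵒᵈ → P) (ht : IsTensor S Sᵒᵈ P gen)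
    (hmul : ∀ x y u v : S,
      gen x (toDual y) * gen u (toDual v) =
        if u ≤ y then ⊥ else gen x (toDual v)) :
    ∃ gc : GirardCouple P (sSupHom S S),
      (∀ x y : S, gc.φ (gen x (toDual y)) = rho x * lam y) ∧
      (∀ (α : sSupHom S S) (x y : S),
        gc.act α (gen x (toDual y)) = gen (α x) (toDual y)) ∧
      (∀ (α : sSupHom S S) (x y : S),
        gc.actr (gen x (toDual y)) α = gen x (toDual (adj α y))) ∧
      gc.d = ⨆ x : S, gen x (toDual x) ∧
      gc.φ ⊤ = ⊤ :=
  ⟨ht.girardCouple hmul, fun x y => ht.coupling_gen x (toDual y),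
    fun α x y => ht.leftAct_gen α x (toDual y), fun α x y => ht.rightAct_gen α x (toDual y),
    rfl, ht.coupling_top⟩
end

section
/- Let C → Q (with map φ) be a Girard couple with cyclic dualizing element d. Define G = {(a, c) ∈ Q × C : φ(c) ≤ a} with componentwise joins and multiplication (a₁, c₁)·(a₂, c₂) = (a₁·a₂, a₁·c₂ ∨ c₁·a₂). Then G is a quantale, it is closed in Q × C (i.e. φ(a₁·c₂ ∨ c₁·a₂) ≤ a₁·a₂), the maps γ(c) = (φ(c), c) and α(a, c) = a are quantale homomorphisms with φ = α∘γ, (e, 0) is a unit of G where e is the unit of Q, and (1_Q, d) is a cyclic dualizing element of G with (a, c)^⊥ = (c^⊥, a^⊥); hence G is a Girard quantale. -/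
namespace Stmt17
variable {C Q : Type*} [Quantale' C] [Quantale' Q]

/-- The underlying set `G = {(a, c) : φ(c) ≤ a}` of the glued quantale. -/
def G (cp : Couple C Q) : Set (Q × C) := {p | cp.φ p.2 ≤ p.1}

/-- The multiplication `(a₁, c₁)·(a₂, c₂) = (a₁a₂, a₁c₂ ∨ c₁a₂)`. -/
def mulG (cp : Couple C Q) (p q : Q × C) : Q × C :=
  (p.1 * q.1, cp.act p.1 q.2 ⊔ cp.actr p.2 q.1)

/-- The map `γ(c) = (φ(c), c)`. -/
def gamma (cp : Couple C Q) (c : C) : Q × C := (cp.φ c, c)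

/-- The unit `e = d^⊥` of `Q`. -/
noncomputable def eG (gc : GirardCouple C Q) : Q :=
  sSup {a : Q | gc.act a gc.d ≤ gc.d}

/-- The cyclic dualizing element `(1_Q, d)` of `G`. -/
def dG (gc : GirardCouple C Q) : Q × C := (⊤, gc.d)

/-- Left orthogonal complement in `G`. -/
noncomputable def lperp (gc : GirardCouple C Q) (p : Q × C) : Q × C :=
  sSup {q | q ∈ G gc.toCouple ∧ mulG gc.toCouple q p ≤ dG gc}

/-- Right orthogonal complement in `G`. -/
noncomputable def rperp (gc : GirardCouple C Q) (p : Q × C) : Q × C :=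
  sSup {q | q ∈ G gc.toCouple ∧ mulG gc.toCouple p q ≤ dG gc}

end Stmt17

section MapSSup
variable {α β : Type*} [CompleteLattice α] [CompleteLattice β]

def sSupHom.ofMapSSup (f : α → β) (hf : ∀ s, f (sSup s) = ⨆ x ∈ s, f x) : sSupHom α β :=
  ⟨f, fun s => by rw [hf, sSup_image]⟩

variable {f : α → β}

lemma monotone_of_map_sSup (hf : ∀ s, f (sSup s) = ⨆ x ∈ s, f x) : Monotone f :=
  OrderHomClass.mono (sSupHom.ofMapSSup f hf)

lemma map_sup_of_map_sSup (hf : ∀ s, f (sSup s) = ⨆ x ∈ s, f x) (x y : α) :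
    f (x ⊔ y) = f x ⊔ f y :=
  map_sup (sSupHom.ofMapSSup f hf) x y

lemma map_bot_of_map_sSup (hf : ∀ s, f (sSup s) = ⨆ x ∈ s, f x) : f ⊥ = ⊥ :=
  map_bot (sSupHom.ofMapSSup f hf)

end MapSSup

namespace Quantale'
variable {α : Type*} [Quantale' α]

lemma mul_le_mul_of_le_left {a b : α} (h : a ≤ b) (c : α) : a * c ≤ b * c :=
  monotone_of_map_sSup (f := (· * c)) (sSup_mul · c) h

lemma mul_le_mul_of_le_right (a : α) {b c : α} (h : b ≤ c) : a * b ≤ a * c :=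
  monotone_of_map_sSup (mul_sSup a) h

end Quantale'

namespace Couple
variable {C Q : Type*} [Quantale' C] [Quantale' Q] (cp : Couple C Q)

lemma act_le_act_left {a b : Q} (h : a ≤ b) (c : C) : cp.act a c ≤ cp.act b c :=
  monotone_of_map_sSup (f := (cp.act · c)) (cp.sSup_act · c) h

lemma act_le_act_right (a : Q) {c c' : C} (h : c ≤ c') : cp.act a c ≤ cp.act a c' :=
  monotone_of_map_sSup (cp.act_sSup a) h

lemma actr_le_actr_right (c : C) {a b : Q} (h : a ≤ b) : cp.actr c a ≤ cp.actr c b :=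
  monotone_of_map_sSup (cp.actr_sSup c) h

lemma act_sup (a : Q) (c c' : C) : cp.act a (c ⊔ c') = cp.act a c ⊔ cp.act a c' :=
  map_sup_of_map_sSup (cp.act_sSup a) c c'

lemma sup_actr (c c' : C) (a : Q) : cp.actr (c ⊔ c') a = cp.actr c a ⊔ cp.actr c' a :=
  map_sup_of_map_sSup (f := (cp.actr · a)) (cp.sSup_actr · a) c c'

lemma φ_sup (c c' : C) : cp.φ (c ⊔ c') = cp.φ c ⊔ cp.φ c' :=
  map_sup_of_map_sSup cp.φ_sSup c c'

lemma act_bot (a : Q) : cp.act a ⊥ = ⊥ :=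
  map_bot_of_map_sSup (cp.act_sSup a)

lemma bot_actr (a : Q) : cp.actr ⊥ a = ⊥ :=
  map_bot_of_map_sSup (f := (cp.actr · a)) (cp.sSup_actr · a)

lemma φ_bot : cp.φ ⊥ = ⊥ :=
  map_bot_of_map_sSup cp.φ_sSup

end Couple

namespace GirardCouple
variable {C Q : Type*} [Quantale' C] [Quantale' Q] (gc : GirardCouple C Q)

/-- The paper's `c^⊥ ∈ Q` for `c ∈ C`. -/
noncomputable def cperp (c : C) : Q := sSup {a : Q | gc.act a c ≤ gc.d}

/-- The paper's `a^⊥ ∈ C` for `a ∈ Q`. -/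
noncomputable def aperp (a : Q) : C := sSup {c : C | gc.act a c ≤ gc.d}

variable {gc}

lemma le_cperp_iff {a : Q} {c : C} : a ≤ gc.cperp c ↔ gc.act a c ≤ gc.d := by
  refine ⟨fun h => (gc.act_le_act_left h c).trans ?_, fun h => le_sSup h⟩
  rw [cperp, gc.sSup_act]
  exact iSup₂_le fun _ ha => ha

lemma le_aperp_iff {a : Q} {c : C} : c ≤ gc.aperp a ↔ gc.act a c ≤ gc.d := by
  refine ⟨fun h => (gc.act_le_act_right a h).trans ?_, fun h => le_sSup h⟩
  rw [aperp, gc.act_sSup]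
  exact iSup₂_le fun _ hc => hc

variable (gc)

lemma cperp_aperp (a : Q) : gc.cperp (gc.aperp a) = a := by
  simpa only [← gc.cyclic, cperp, aperp] using gc.dualizing_Q₁ a

lemma aperp_cperp (c : C) : gc.aperp (gc.cperp c) = c := by
  simpa only [← gc.cyclic, cperp, aperp] using gc.dualizing_C₁ c

variable {gc}

lemma eq_of_forall_act_le_iff_left {a b : Q} (h : ∀ c, gc.act a c ≤ gc.d ↔ gc.act b c ≤ gc.d) :
    a = b := by
  rw [← gc.cperp_aperp a, ← gc.cperp_aperp b, aperp, aperp]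
  simp only [h]

lemma eq_of_forall_act_le_iff_right {c c' : C}
    (h : ∀ a, gc.act a c ≤ gc.d ↔ gc.act a c' ≤ gc.d) : c = c' := by
  rw [← gc.aperp_cperp c, ← gc.aperp_cperp c', cperp, cperp]
  simp only [h]

variable (gc)

noncomputable def unit : Q := gc.cperp gc.d

variable {gc}

lemma act_unit_le_iff {c : C} : gc.act gc.unit c ≤ gc.d ↔ c ≤ gc.d := by
  rw [← le_aperp_iff, unit, aperp_cperp]

variable (gc)

lemma act_unit (c : C) : gc.act gc.unit c = c :=
  eq_of_forall_act_le_iff_right fun a => by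
    rw [← gc.act_mul, gc.cyclic, gc.actr_mul, ← gc.cyclic, act_unit_le_iff, gc.cyclic]

lemma actr_unit (c : C) : gc.actr c gc.unit = c :=
  eq_of_forall_act_le_iff_right fun a => by
    rw [← gc.act_actr, ← gc.cyclic, act_unit_le_iff]

lemma unit_mul (a : Q) : gc.unit * a = a :=
  eq_of_forall_act_le_iff_left fun c => by rw [gc.act_mul, act_unit]

lemma mul_unit (a : Q) : a * gc.unit = a :=
  eq_of_forall_act_le_iff_left fun c => by rw [gc.act_mul, act_unit]

end GirardCouple

namespace Stmt17
variable {C Q : Type*} [Quantale' C] [Quantale' Q]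

section Glueing
variable (cp : Couple C Q)

lemma mulG_mem {p q : Q × C} (hp : p ∈ G cp) (hq : q ∈ G cp) : mulG cp p q ∈ G cp := by
  change cp.φ (cp.act p.1 q.2 ⊔ cp.actr p.2 q.1) ≤ p.1 * q.1
  rw [cp.φ_sup, cp.φ_act, cp.φ_actr]
  exact sup_le (Quantale'.mul_le_mul_of_le_right _ hq) (Quantale'.mul_le_mul_of_le_left hp _)

lemma mulG_assoc (p q r : Q × C) : mulG cp (mulG cp p q) r = mulG cp p (mulG cp q r) := by
  refine Prod.ext (Quantale'.mul_assoc _ _ _) ?_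
  change cp.act (p.1 * q.1) r.2 ⊔ cp.actr (cp.act p.1 q.2 ⊔ cp.actr p.2 q.1) r.1 =
    cp.act p.1 (cp.act q.1 r.2 ⊔ cp.actr q.2 r.1) ⊔ cp.actr p.2 (q.1 * r.1)
  rw [cp.act_mul, cp.sup_actr, cp.act_sup, ← cp.act_actr, cp.actr_mul, sup_assoc]

lemma sSup_mem_G {s : Set (Q × C)} (hs : s ⊆ G cp) : sSup s ∈ G cp := by
  change cp.φ (sSup s).2 ≤ (sSup s).1
  rw [Prod.snd_sSup, Prod.fst_sSup, cp.φ_sSup, iSup_image, sSup_image]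
  exact iSup₂_mono fun _ hp => hs hp

lemma mulG_sSup (p : Q × C) (s : Set (Q × C)) :
    mulG cp p (sSup s) = ⨆ q ∈ s, mulG cp p q := by
  ext
  · simp only [mulG, Prod.fst_sSup, Prod.fst_iSup, Quantale'.mul_sSup, iSup_image]
  · simp only [mulG, Prod.fst_sSup, Prod.snd_sSup, Prod.snd_iSup, cp.act_sSup, cp.actr_sSup,
      iSup_image, iSup_sup_eq]

lemma sSup_mulG (p : Q × C) (s : Set (Q × C)) :
    mulG cp (sSup s) p = ⨆ q ∈ s, mulG cp q p := by
  ext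
  · simp only [mulG, Prod.fst_sSup, Prod.fst_iSup, Quantale'.sSup_mul, iSup_image]
  · simp only [mulG, Prod.fst_sSup, Prod.snd_sSup, Prod.snd_iSup, cp.sSup_act, cp.sSup_actr,
      iSup_image, iSup_sup_eq]

lemma gamma_sSup (s : Set C) : gamma cp (sSup s) = ⨆ c ∈ s, gamma cp c := by
  ext
  · simp only [gamma, cp.φ_sSup, Prod.fst_iSup]
  · simp only [gamma, Prod.snd_iSup, sSup_eq_iSup]

lemma gamma_mul (c₁ c₂ : C) : gamma cp (c₁ * c₂) = mulG cp (gamma cp c₁) (gamma cp c₂) := by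
  ext
  · change cp.φ (c₁ * c₂) = cp.φ c₁ * cp.φ c₂
    rw [← cp.couple_left, cp.φ_act]
  · change c₁ * c₂ = cp.act (cp.φ c₁) c₂ ⊔ cp.actr c₁ (cp.φ c₂)
    rw [cp.couple_left, cp.couple_right, sup_idem]

end Glueing

section Girard
variable (gc : GirardCouple C Q)

lemma mulG_unit_left (p : Q × C) : mulG gc.toCouple (eG gc, ⊥) p = p := by
  ext
  · exact gc.unit_mul p.1
  · change gc.act gc.unit p.2 ⊔ gc.actr ⊥ p.1 = p.2
    rw [gc.act_unit, gc.bot_actr, sup_bot_eq]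

lemma mulG_unit_right (p : Q × C) : mulG gc.toCouple p (eG gc, ⊥) = p := by
  ext
  · exact gc.mul_unit p.1
  · change gc.act p.1 ⊥ ⊔ gc.actr p.2 gc.unit = p.2
    rw [gc.act_bot, gc.actr_unit, bot_sup_eq]

lemma mulG_le_dG_iff {p q : Q × C} :
    mulG gc.toCouple p q ≤ dG gc ↔ gc.act p.1 q.2 ≤ gc.d ∧ gc.act q.1 p.2 ≤ gc.d := by
  simp only [mulG, dG, Prod.mk_le_mk, le_top, true_and, sup_le_iff, ← gc.cyclic]

lemma mulG_le_dG_comm {p q : Q × C} :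
    mulG gc.toCouple p q ≤ dG gc ↔ mulG gc.toCouple q p ≤ dG gc := by
  rw [mulG_le_dG_iff, mulG_le_dG_iff, and_comm]

lemma perp_mem_G {p : Q × C} (hp : p ∈ G gc.toCouple) :
    (gc.cperp p.2, gc.aperp p.1) ∈ G gc.toCouple := by
  change gc.φ (gc.aperp p.1) ≤ gc.cperp p.2
  rw [GirardCouple.le_cperp_iff, gc.couple_left, ← gc.couple_right]
  exact (gc.actr_le_actr_right _ hp).trans
    ((gc.cyclic _ _).mp (GirardCouple.le_aperp_iff.mp le_rfl))

lemma lperp_eq {p : Q × C} (hp : p ∈ G gc.toCouple) :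
    lperp gc p = (gc.cperp p.2, gc.aperp p.1) := by
  refine IsLUB.sSup_eq (IsGreatest.isLUB ⟨⟨perp_mem_G gc hp, ?_⟩, ?_⟩)
  · rw [mulG_le_dG_iff]
    exact ⟨GirardCouple.le_cperp_iff.mp le_rfl, GirardCouple.le_aperp_iff.mp le_rfl⟩
  · rintro q ⟨-, hq⟩
    rw [mulG_le_dG_iff] at hq
    exact ⟨GirardCouple.le_cperp_iff.mpr hq.1, GirardCouple.le_aperp_iff.mpr hq.2⟩

lemma rperp_eq_lperp (p : Q × C) : rperp gc p = lperp gc p := by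
  simp only [rperp, lperp, mulG_le_dG_comm]

lemma lperp_lperp {p : Q × C} (hp : p ∈ G gc.toCouple) : lperp gc (lperp gc p) = p := by
  rw [lperp_eq gc hp, lperp_eq gc (perp_mem_G gc hp), gc.cperp_aperp, gc.aperp_cperp]

end Girard

/-- The glueing of a Girard couple is a Girard quantale `G`, through which `φ`
factors as `α∘γ`, with unit `(e, 0)` and cyclic dualizing element `(1_Q, d)`
satisfying `(a, c)^⊥ = (c^⊥, a^⊥)`. -/
theorem stmt17 (gc : GirardCouple C Q) :
    -- G is closed under multiplication (φ(a₁·c₂ ∨ c₁·a₂) ≤ a₁·a₂)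
    (∀ p q, p ∈ G gc.toCouple → q ∈ G gc.toCouple →
      mulG gc.toCouple p q ∈ G gc.toCouple) ∧
    -- the multiplication is associative
    (∀ p q r, mulG gc.toCouple (mulG gc.toCouple p q) r =
      mulG gc.toCouple p (mulG gc.toCouple q r)) ∧
    -- G is closed under (componentwise) joins, so is a complete lattice
    (∀ s : Set (Q × C), s ⊆ G gc.toCouple → sSup s ∈ G gc.toCouple) ∧
    -- the multiplication distributes over joins: G is a quantale
    (∀ (p : Q × C) (s : Set (Q × C)),
      mulG gc.toCouple p (sSup s) = ⨆ q ∈ s, mulG gc.toCouple p q) ∧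
    (∀ (p : Q × C) (s : Set (Q × C)),
      mulG gc.toCouple (sSup s) p = ⨆ q ∈ s, mulG gc.toCouple q p) ∧
    -- γ is a quantale homomorphism into G
    (∀ c : C, gamma gc.toCouple c ∈ G gc.toCouple) ∧
    (∀ s : Set C, gamma gc.toCouple (sSup s) = ⨆ c ∈ s, gamma gc.toCouple c) ∧
    (∀ c₁ c₂ : C, gamma gc.toCouple (c₁ * c₂) =
      mulG gc.toCouple (gamma gc.toCouple c₁) (gamma gc.toCouple c₂)) ∧
    -- α = fst is a quantale homomorphism and φ = α∘γ
    (∀ p q, (mulG gc.toCouple p q).1 = p.1 * q.1) ∧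
    (∀ s : Set (Q × C), (sSup s).1 = ⨆ p ∈ s, p.1) ∧
    (∀ c : C, (gamma gc.toCouple c).1 = gc.φ c) ∧
    -- (e, 0) is a unit of G
    ((eG gc, (⊥ : C)) ∈ G gc.toCouple ∧
     ∀ p, p ∈ G gc.toCouple →
       mulG gc.toCouple (eG gc, ⊥) p = p ∧ mulG gc.toCouple p (eG gc, ⊥) = p) ∧
    -- (1_Q, d) is cyclic
    (dG gc ∈ G gc.toCouple ∧
     ∀ p q, p ∈ G gc.toCouple → q ∈ G gc.toCouple →
       (mulG gc.toCouple p q ≤ dG gc ↔ mulG gc.toCouple q p ≤ dG gc)) ∧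
    -- (a, c)^⊥ = (c^⊥, a^⊥)
    (∀ p, p ∈ G gc.toCouple →
      lperp gc p = (sSup {a : Q | gc.act a p.2 ≤ gc.d},
                    sSup {c : C | gc.act p.1 c ≤ gc.d}) ∧
      rperp gc p = (sSup {a : Q | gc.act a p.2 ≤ gc.d},
                    sSup {c : C | gc.act p.1 c ≤ gc.d})) ∧
    -- (1_Q, d) is dualizing
    (∀ p, p ∈ G gc.toCouple →
      lperp gc (rperp gc p) = p ∧ rperp gc (lperp gc p) = p) := by
  refine ⟨fun _ _ hp hq => mulG_mem _ hp hq, mulG_assoc _, fun _ hs => sSup_mem_G _ hs,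
    mulG_sSup _, sSup_mulG _, fun _ => le_rfl, gamma_sSup _, gamma_mul _, fun _ _ => rfl,
    fun s => by rw [Prod.fst_sSup, sSup_image], fun _ => rfl, ?_, ?_, ?_, ?_⟩
  · exact ⟨gc.φ_bot.trans_le bot_le,
      fun p _ => ⟨mulG_unit_left gc p, mulG_unit_right gc p⟩⟩
  · exact ⟨le_top, fun _ _ _ _ => mulG_le_dG_comm gc⟩
  · exact fun p hp => ⟨lperp_eq gc hp, (rperp_eq_lperp gc p).trans (lperp_eq gc hp)⟩
  · intro p hp
    simp only [rperp_eq_lperp, lperp_lperp gc hp, and_self]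

end Stmt17
end
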